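/- Let K be a propositional base. For every Minimal Inconsistency Relation ∼ of K and every equivalence class C of Occ(K)/∼ with |C| ≥ 2, C contains at least one positive variable occurrence and at least one negative variable occurrence of K. -/

import Mathlib

namespace Occ

/-- Propositional formulas over variables indexed by `ℕ`,
built from variables using negation and conjunction. -/
inductive Form : Type where
  | var : ℕ → Form
  | neg : Form → Form
  | conj : Form → Form → Form
deriving DecidableEq

/-- Boolean evaluation of a formula under an interpretation `w`. -/
def eval (w : ℕ → Bool) : Form → Bool
  | .var p => w p
  | .neg φ => !(eval w φ)
  | .conj φ ψ => eval w φ && eval w ψ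

/-- The variables occurring in a formula. -/
def vars : Form → Finset ℕ
  | .var p => {p}
  | .neg φ => vars φ
  | .conj φ ψ => vars φ ∪ vars ψ

/-- A step in a path addressing a subformula occurrence. -/
inductive Step : Type where
  | neg | left | right
deriving DecidableEq

/-- `occAt φ l pol = some (p, pol')` iff the path `l` addresses an occurrence of the
variable `p` in `φ`, and this occurrence has polarity `pol'` (`true` = positive)
when the ambient polarity of `φ` is `pol`. -/
def occAt : Form → List Step → Bool → Option (ℕ × Bool)
  | .var p, [], pol => some (p, pol)
  | .neg φ, .neg :: l, pol => occAt φ l (!pol)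
  | .conj φ _, .left :: l, pol => occAt φ l pol
  | .conj _ ψ, .right :: l, pol => occAt ψ l pol
  | _, _, _ => none

/-- A variable occurrence in a base: a formula together with a path into it. -/
abbrev Occurrence : Type := Form × List Step

/-- A propositional base: a finite set of formulas. -/
abbrev PB : Type := Finset Form

/-- `o` is a variable occurrence in the base `K`. -/
def IsOcc (K : PB) (o : Occurrence) : Prop :=
  o.1 ∈ K ∧ ∃ p pol, occAt o.1 o.2 true = some (p, pol)

/-- `o` is an occurrence of the variable `p` in `K`, of polarity `pol`. -/
def IsOccOf (K : PB) (o : Occurrence) (p : ℕ) (pol : Bool) : Prop :=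
  o.1 ∈ K ∧ occAt o.1 o.2 true = some (p, pol)

/-- `o` is an occurrence of the variable `p` in `K`. -/
def IsOccVar (K : PB) (o : Occurrence) (p : ℕ) : Prop :=
  ∃ pol, IsOccOf K o p pol

/-- `o` is a positive variable occurrence in `K`. -/
def IsPosOcc (K : PB) (o : Occurrence) : Prop := ∃ p, IsOccOf K o p true

/-- `o` is a negative variable occurrence in `K`. -/
def IsNegOcc (K : PB) (o : Occurrence) : Prop := ∃ p, IsOccOf K o p false

/-- `o` and `o'` are occurrences of the same variable. -/
def sameVar (o o' : Occurrence) : Prop :=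
  ∃ p pol pol', occAt o.1 o.2 true = some (p, pol) ∧ occAt o'.1 o'.2 true = some (p, pol')

/-- The variables occurring in a base. -/
def varsPB (K : PB) : Finset ℕ := K.sup vars

/-- `w` is a (Boolean) model of the base `K` (i.e. of the conjunction of its formulas). -/
def modelsPB (w : ℕ → Bool) (K : PB) : Prop := ∀ φ ∈ K, eval w φ = true

/-- A base is consistent iff the conjunction of its formulas has a model. -/
def ConsistentPB (K : PB) : Prop := ∃ w, modelsPB w K

/-- Classical entailment from a base. -/
def Entails (K : PB) (φ : Form) : Prop := ∀ w, modelsPB w K → eval w φ = true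

/-- Rename every variable occurrence of a formula, the new variable of the
occurrence at path `l` being `f l`. -/
def renameBy : (List Step → ℕ) → Form → Form
  | f, .var _ => .var (f [])
  | f, .neg φ => .neg (renameBy (fun l => f (.neg :: l)) φ)
  | f, .conj φ ψ =>
      .conj (renameBy (fun l => f (.left :: l)) φ) (renameBy (fun l => f (.right :: l)) ψ)

/-- The formula `φ` (viewed as a member of a base) with each occurrence `o`
replaced by the variable `R o`. -/
def renameForm (R : Occurrence → ℕ) (φ : Form) : Form :=
  renameBy (fun l => R (φ, l)) φ

/-- A C-renaming of `K`: it assigns a pairwise distinct fresh variable to each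
occurrence of `K`. -/
structure IsCRenaming (K : PB) (R : Occurrence → ℕ) : Prop where
  fresh : ∀ o, IsOcc K o → R o ∉ varsPB K
  inj : ∀ o o', IsOcc K o → IsOcc K o' → R o = R o' → o = o'

/-- Binary relations on occurrences, viewed as sets of ordered pairs. -/
abbrev Rel : Type := Set (Occurrence × Occurrence)

/-- `r` is an equivalence relation on `Occ(K)`. -/
structure IsEquivOn (K : PB) (r : Rel) : Prop where
  dom : ∀ q ∈ r, IsOcc K q.1 ∧ IsOcc K q.2
  refl : ∀ o, IsOcc K o → (o, o) ∈ r
  symm : ∀ q ∈ r, (q.2, q.1) ∈ r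
  trans : ∀ a b c : Occurrence, (a, b) ∈ r → (b, c) ∈ r → (a, c) ∈ r

/-- Compliance: related occurrences are occurrences of the same variable. -/
def Compliant (r : Rel) : Prop := ∀ q ∈ r, sameVar q.1 q.2

/-- Consistency of the formula `⋀R(K) ∧ ⋀_{(o,o')∈r} (R(o) ↔ R(o'))`. -/
def RelConsistent (K : PB) (R : Occurrence → ℕ) (r : Rel) : Prop :=
  ∃ w : ℕ → Bool, (∀ φ ∈ K, eval w (renameForm R φ) = true) ∧
    ∀ q ∈ r, w (R q.1) = w (R q.2)

/-- Minimal Inconsistency Relation of `K` (w.r.t. the C-renaming `R`). -/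
def IsMIR (K : PB) (R : Occurrence → ℕ) (r : Rel) : Prop :=
  IsEquivOn K r ∧ Compliant r ∧ ¬ RelConsistent K R r ∧
    ∀ r', IsEquivOn K r' → Compliant r' → ¬ RelConsistent K R r' → ¬ r' ⊂ r

/-- Maximal Consistency Relation of `K` (w.r.t. the C-renaming `R`). -/
def IsMCR (K : PB) (R : Occurrence → ℕ) (r : Rel) : Prop :=
  IsEquivOn K r ∧ Compliant r ∧ RelConsistent K R r ∧
    ∀ r', IsEquivOn K r' → Compliant r' → RelConsistent K R r' → ¬ r ⊂ r'

/-- The relation `∼_c^K`: relating occurrences of `K` of the same variable. -/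
def sameVarRel (K : PB) : Rel :=
  {q | IsOcc K q.1 ∧ IsOcc K q.2 ∧ sameVar q.1 q.2}

/-- `PN(r)`: related pairs consisting of a positive and a negative occurrence. -/
def PN (K : PB) (r : Rel) : Rel :=
  {q | q ∈ r ∧ IsPosOcc K q.1 ∧ IsNegOcc K q.2}

/-- A BMCR: an MCR satisfying Maximality-2. -/
def IsBMCR (K : PB) (R : Occurrence → ℕ) (r : Rel) : Prop :=
  IsMCR K R r ∧
    ∀ r', IsEquivOn K r' → Compliant r' → RelConsistent K R r' → ¬ PN K r ⊂ PN K r'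

/-- `H` is a hitting set of the collection `S`. -/
def IsHittingSet {α : Type} (S : Set (Set α)) (H : Set α) : Prop :=
  ∀ s ∈ S, (s ∩ H).Nonempty

/-- `H` is a minimal hitting set of the collection `S`. -/
def IsMinHittingSet {α : Type} (S : Set (Set α)) (H : Set α) : Prop :=
  IsHittingSet S H ∧ ∀ H', H' ⊂ H → ¬ IsHittingSet S H'

/-- `r` is `H`-maximal (for an equivalence relation `r ⊆ ∼_c^K`). -/
def IsHMaximal (K : PB) (H r : Rel) : Prop :=
  r ∩ H = ∅ ∧
    ∀ r', IsEquivOn K r' → r' ⊆ sameVarRel K → r ⊂ r' → (r' ∩ H).Nonempty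

/-- `r` is `H`-minimal (for an equivalence relation `r ⊆ ∼_c^K`). -/
def IsHMinimal (K : PB) (H r : Rel) : Prop :=
  H ⊆ r ∧ ∀ r', IsEquivOn K r' → r' ⊂ r → ¬ H ⊆ r'

/-- The set of all MIRs of `K`. -/
def MIRs (K : PB) (R : Occurrence → ℕ) : Set Rel := {r | IsMIR K R r}

/-- The set of all C-MCRs of `K`: relations `θ ⊆ ∼_c^K` with `∼_c^K ∖ θ` an MCR. -/
def CMCRs (K : PB) (R : Occurrence → ℕ) : Set Rel :=
  {θ | θ ⊆ sameVarRel K ∧ IsMCR K R (sameVarRel K \ θ)}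

/-- `ρ` is a `∼`-renaming for the equivalence relation `r` on `Occ(K)`:
it assigns a distinct variable to each equivalence class (so it is constant on
classes and distinguishes distinct classes), and any class containing all the
occurrences of a variable `p` is mapped to `p` itself. -/
def IsClassRenaming (K : PB) (r : Rel) (ρ : Occurrence → ℕ) : Prop :=
  (∀ o o', IsOcc K o → IsOcc K o' → (ρ o = ρ o' ↔ (o, o') ∈ r)) ∧
    (∀ o p, IsOccVar K o p → (∀ o', IsOccVar K o' p → (o, o') ∈ r) → ρ o = p)

/-- `σ` encodes a tuple `(q₁,…,q_m) ∈ P(ρ_∼, S)` where `S = (p₁,…,p_m)`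
enumerates `var(K) ∩ var(φ)`: it maps each shared variable `p` to a member of
`⌈ρ⌉(p)` and is the identity elsewhere. -/
def IsTupleChoice (K : PB) (φ : Form) (ρ : Occurrence → ℕ) (σ : ℕ → ℕ) : Prop :=
  (∀ p, p ∈ varsPB K → p ∈ vars φ → ∃ o, IsOccVar K o p ∧ σ p = ρ o) ∧
    (∀ p, ¬ (p ∈ varsPB K ∧ p ∈ vars φ) → σ p = p)

/-- Simultaneous substitution of variables by variables. -/
def substV (σ : ℕ → ℕ) : Form → Form
  | .var p => .var (σ p)
  | .neg φ => .neg (substV σ φ)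
  | .conj φ ψ => .conj (substV σ φ) (substV σ ψ)

/-- `ρ_∼(K) ⊢ ψ`. -/
def rhoEntails (K : PB) (ρ : Occurrence → ℕ) (ψ : Form) : Prop :=
  ∀ w : ℕ → Bool, (∀ φ ∈ K, eval w (renameForm ρ φ) = true) → eval w ψ = true

/-- The inference relation `K ⊩₁ φ`. -/
def Inf1 (K : PB) (R : Occurrence → ℕ) (φ : Form) : Prop :=
  ∀ r ρ, IsMCR K R r → IsClassRenaming K r ρ →
    ∃ σ, IsTupleChoice K φ ρ σ ∧ rhoEntails K ρ (substV σ φ)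

/-- The inference relation `K ⊩₂ φ`. -/
def Inf2 (K : PB) (R : Occurrence → ℕ) (φ : Form) : Prop :=
  ∀ r ρ, IsMCR K R r → IsClassRenaming K r ρ →
    ∀ σ, IsTupleChoice K φ ρ σ → rhoEntails K ρ (substV σ φ)

/-- The inference relation `K ⊩₁^B φ`. -/
def Inf1B (K : PB) (R : Occurrence → ℕ) (φ : Form) : Prop :=
  ∀ r ρ, IsBMCR K R r → IsClassRenaming K r ρ →
    ∃ σ, IsTupleChoice K φ ρ σ ∧ rhoEntails K ρ (substV σ φ)

/-- The inference relation `K ⊩₂^B φ`. -/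
def Inf2B (K : PB) (R : Occurrence → ℕ) (φ : Form) : Prop :=
  ∀ r ρ, IsBMCR K R r → IsClassRenaming K r ρ →
    ∀ σ, IsTupleChoice K φ ρ σ → rhoEntails K ρ (substV σ φ)

/-- `μ` is an o-model of `K`: any interpretation `w` with `w (R o) = μ o` for all
occurrences `o` of `K` is a model of `⋀R(K)`. -/
def OModel (K : PB) (R : Occurrence → ℕ) (μ : Occurrence → Bool) : Prop :=
  ∀ w : ℕ → Bool, (∀ o, IsOcc K o → w (R o) = μ o) →
    ∀ φ ∈ K, eval w (renameForm R φ) = true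

/-- `diff_a(μ)`: pairs of occurrences of the same variable on which `μ` differs. -/
def diffA (K : PB) (μ : Occurrence → Bool) : Rel :=
  {q | IsOcc K q.1 ∧ IsOcc K q.2 ∧ sameVar q.1 q.2 ∧ μ q.1 ≠ μ q.2}

/-- `μ` is an a-minimal o-model of `K`. -/
def AMinOModel (K : PB) (R : Occurrence → ℕ) (μ : Occurrence → Bool) : Prop :=
  OModel K R μ ∧ ∀ μ', OModel K R μ' → ¬ diffA K μ' ⊂ diffA K μ

/-- A Boolean interpretation `w` is compatible with an o-interpretation `μ`. -/
def Compatible (K : PB) (μ : Occurrence → Bool) (w : ℕ → Bool) : Prop :=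
  ∀ p ∈ varsPB K, ∃ o, IsOccVar K o p ∧ w p = μ o

/-- The inference relation `K ⊩_{a1} φ`. -/
def InfA1 (K : PB) (R : Occurrence → ℕ) (φ : Form) : Prop :=
  ∀ μ, AMinOModel K R μ → ∃ w, Compatible K μ w ∧ eval w φ = true

/-- The inference relation `K ⊩_{a2} φ`. -/
def InfA2 (K : PB) (R : Occurrence → ℕ) (φ : Form) : Prop :=
  ∀ μ, AMinOModel K R μ → ∀ w, Compatible K μ w → eval w φ = true

/-- LP_m evaluation: an LP_m interpretation assigns a (nonempty) set of truth
values to each variable; it extends to formulas pointwise. -/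
def lpEval (lam : ℕ → Set Bool) : Form → Set Bool
  | .var p => lam p
  | .neg φ => (fun v => !v) '' lpEval lam φ
  | .conj φ ψ => Set.image2 (· && ·) (lpEval lam φ) (lpEval lam ψ)

/-- `lam` is an LP_m interpretation: each variable gets a nonempty set of values. -/
def IsLPInterp (lam : ℕ → Set Bool) : Prop := ∀ p, (lam p).Nonempty

/-- `lam` is an LP_m model of `⋀K`. -/
def LPModelPB (lam : ℕ → Set Bool) (K : PB) : Prop := ∀ φ ∈ K, true ∈ lpEval lam φ

/-- `λ! = {p : λ(p) = {0,1}}`. -/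
def lpBang (lam : ℕ → Set Bool) : Set ℕ := {p | lam p = Set.univ}

/-- `lam` is a minimal LP_m model of `⋀K`. -/
def MinLPModelPB (K : PB) (lam : ℕ → Set Bool) : Prop :=
  IsLPInterp lam ∧ LPModelPB lam K ∧
    ∀ lam', IsLPInterp lam' → LPModelPB lam' K → ¬ lpBang lam' ⊂ lpBang lam

/-- `K ⊢_{LPm} φ`. -/
def LPmEntails (K : PB) (φ : Form) : Prop :=
  ∀ lam, MinLPModelPB K lam → true ∈ lpEval lam φ

/-- Replace the subformula occurrence of `φ` addressed by the path `l` by `ψ`. -/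
def replaceAt : Form → List Step → Form → Form
  | _, [], ψ => ψ
  | .neg φ, .neg :: l, ψ => .neg (replaceAt φ l ψ)
  | .conj φ χ, .left :: l, ψ => .conj (replaceAt φ l ψ) χ
  | .conj φ χ, .right :: l, ψ => .conj φ (replaceAt χ l ψ)
  | φ, _, _ => φ

/-- The equivalence relation `∼_λ` induced on `Occ(K)` by an LP_m interpretation:
its classes are `Occ(p,K)` for `|λ(p)| = 1` and `PosOcc(p,K)`, `NegOcc(p,K)` for
`λ(p) = {0,1}`. -/
def lamRel (K : PB) (lam : ℕ → Set Bool) : Rel :=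
  {q | ∃ p pol pol', IsOccOf K q.1 p pol ∧ IsOccOf K q.2 p pol' ∧
    (lam p = Set.univ → pol = pol')}

open scoped Classical in
/-- The o-interpretation `μ_λ^K` associated with an LP_m interpretation `λ`. -/
noncomputable def muOf (lam : ℕ → Set Bool) (o : Occurrence) : Bool :=
  match occAt o.1 o.2 true with
  | some (p, pol) =>
      if lam p = ({false} : Set Bool) then false
      else if lam p = ({true} : Set Bool) then true
      else pol
  | none => false

def PolLE : Bool → Bool → Bool → Prop
  | true, a, b => a ≤ b
  | false, a, b => b ≤ a

theorem PolLE.not {pol a b : Bool} (h : PolLE (!pol) a b) : PolLE pol (!a) (!b) := by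
  cases pol <;> cases a <;> cases b <;> simp_all [PolLE]

theorem PolLE.and {pol a b c d : Bool} (hab : PolLE pol a b) (hcd : PolLE pol c d) :
    PolLE pol (a && c) (b && d) := by
  cases pol <;> cases a <;> cases b <;> cases c <;> cases d <;> simp_all [PolLE]

/-- Raising positive occurrences and lowering negative ones can only raise the value of a
formula of positive polarity. -/
theorem eval_renameBy_polLE (w w' : ℕ → Bool) (φ : Form) (f : List Step → ℕ) (pol : Bool)
    (h : ∀ l p pol', occAt φ l pol = some (p, pol') → PolLE pol' (w (f l)) (w' (f l))) :
    PolLE pol (eval w (renameBy f φ)) (eval w' (renameBy f φ)) := by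
  induction φ generalizing f pol with
  | var p => exact h [] p pol rfl
  | neg φ ih => exact PolLE.not (ih _ _ fun l p pol' hl => h (.neg :: l) p pol' hl)
  | conj φ ψ ih₁ ih₂ =>
    exact PolLE.and (ih₁ _ _ fun l p pol' hl => h (.left :: l) p pol' hl)
      (ih₂ _ _ fun l p pol' hl => h (.right :: l) p pol' hl)

/-- The relation `r` with the class of `o` broken up into singletons. -/
def splitClass (r : Rel) (o : Occurrence) : Rel :=
  {q | q ∈ r ∧ ((o, q.1) ∈ r → q.1 = q.2)}

theorem splitClass_subset (r : Rel) (o : Occurrence) : splitClass r o ⊆ r :=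
  fun _ hq => hq.1

namespace IsEquivOn

variable {K : PB} {r : Rel}

theorem mem_class_iff (hr : IsEquivOn K r) {o a c : Occurrence} (hac : (a, c) ∈ r) :
    (o, a) ∈ r ↔ (o, c) ∈ r :=
  ⟨fun h => hr.trans _ _ _ h hac, fun h => hr.trans _ _ _ h (hr.symm _ hac)⟩

theorem splitClass (hr : IsEquivOn K r) (o : Occurrence) : IsEquivOn K (splitClass r o) where
  dom q hq := hr.dom q hq.1
  refl a ha := ⟨hr.refl a ha, fun _ => rfl⟩
  symm := by
    rintro ⟨a, c⟩ ⟨hac, hsingle⟩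
    exact ⟨hr.symm _ hac, fun hoc => (hsingle ((hr.mem_class_iff hac).2 hoc)).symm⟩
  trans := by
    rintro a c d ⟨hac, hsingle₁⟩ ⟨hcd, hsingle₂⟩
    refine ⟨hr.trans _ _ _ hac hcd, fun hoa => ?_⟩
    obtain rfl : a = c := hsingle₁ hoa
    exact hsingle₂ hoa

theorem splitClass_ssubset (hr : IsEquivOn K r) {o o' : Occurrence} (hoo' : (o, o') ∈ r)
    (hne : o' ≠ o) : Occ.splitClass r o ⊂ r := by
  refine (splitClass_subset r o).ssubset_of_not_subset fun hsub => hne ?_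
  exact ((hsub hoo').2 (hr.refl o (hr.dom _ hoo').1)).symm

end IsEquivOn

theorem Compliant.mono {r r' : Rel} (hr : Compliant r) (h : r' ⊆ r) : Compliant r' :=
  fun q hq => hr q (h hq)

/-- Witness: the model of `splitClass r o` with every renamed occurrence of the class of `o`
set to `b`; by monotonicity `⋀R(K)` stays true. -/
theorem relConsistent_of_splitClass {K : PB} {R : Occurrence → ℕ} (hR : IsCRenaming K R)
    {r : Rel} (hr : IsEquivOn K r) {o : Occurrence} {b : Bool}
    (hunif : ∀ c p pol, (o, c) ∈ r → IsOccOf K c p pol → pol = b)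
    (hsplit : RelConsistent K R (splitClass r o)) : RelConsistent K R r := by
  classical
  obtain ⟨w, hwK, hwr⟩ := hsplit
  have hclass : ∀ a, IsOcc K a → ((∃ c, (o, c) ∈ r ∧ R c = R a) ↔ (o, a) ∈ r) :=
    fun a ha => ⟨fun ⟨c, hc, hRc⟩ => hR.inj c a (hr.dom _ hc).2 ha hRc ▸ hc,
      fun hoa => ⟨a, hoa, rfl⟩⟩
  set w' : ℕ → Bool := fun v => if ∃ c, (o, c) ∈ r ∧ R c = v then b else w v
  have hw' : ∀ a, IsOcc K a → w' (R a) = if (o, a) ∈ r then b else w (R a) :=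
    fun a ha => if_congr (hclass a ha) rfl rfl
  refine ⟨w', fun φ hφ => ?_, fun ⟨a, c⟩ hac => ?_⟩
  · have hmono : PolLE true (eval w (renameForm R φ)) (eval w' (renameForm R φ)) := by
      refine eval_renameBy_polLE w w' φ _ true fun l p pol hl => ?_
      rw [hw' (φ, l) ⟨hφ, p, pol, hl⟩]
      split_ifs with hc
      · obtain rfl := hunif _ p pol hc ⟨hφ, hl⟩
        cases pol <;> simp [PolLE]
      · cases pol <;> exact le_rfl
    rw [PolLE, hwK φ hφ] at hmono
    exact le_antisymm (Bool.le_true _) hmono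
  · obtain ⟨ha, hc⟩ := hr.dom _ hac
    rw [hw' a ha, hw' c hc]
    by_cases hoa : (o, a) ∈ r
    · rw [if_pos hoa, if_pos ((hr.mem_class_iff hac).1 hoa)]
    · rw [if_neg hoa, if_neg (mt (hr.mem_class_iff hac).2 hoa)]
      exact hwr (a, c) ⟨hac, fun h => absurd h hoa⟩

/-- If the class had no occurrence of polarity `b`, splitting it into singletons would give a
smaller relation that is still inconsistent. -/
theorem IsMIR.exists_mem_class_isOccOf {K : PB} {R : Occurrence → ℕ} (hR : IsCRenaming K R)
    {r : Rel} (hr : IsMIR K R r) {o o' : Occurrence} (hoo' : (o, o') ∈ r) (hne : o' ≠ o)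
    (b : Bool) : ∃ c, (o, c) ∈ r ∧ ∃ p, IsOccOf K c p b := by
  obtain ⟨hequiv, hcomp, hinc, hmin⟩ := hr
  by_contra! hnone
  have hunif : ∀ c p pol, (o, c) ∈ r → IsOccOf K c p pol → pol = !b := by
    intro c p pol hc hocc
    cases pol <;> cases b <;> simp_all
  have hsplit : RelConsistent K R (splitClass r o) := by
    by_contra hsplit
    exact hmin _ (hequiv.splitClass o) (hcomp.mono (splitClass_subset r o)) hsplit
      (hequiv.splitClass_ssubset hoo' hne)
  exact hinc (relConsistent_of_splitClass hR hequiv hunif hsplit)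

end Occ
theorem MIR_class_contains_both_polarities_general (K : Occ.PB)
    (R : Occ.Occurrence → ℕ) (hR : Occ.IsCRenaming K R)
    (r : Occ.Rel) (hr : Occ.IsMIR K R r)
    (o : Occ.Occurrence)
    (htwo : ∃ o', (o, o') ∈ r ∧ o' ≠ o) :
    (∃ op, (o, op) ∈ r ∧ Occ.IsPosOcc K op) ∧
      (∃ og, (o, og) ∈ r ∧ Occ.IsNegOcc K og) := by
  obtain ⟨o', hoo', hne⟩ := htwo
  exact ⟨hr.exists_mem_class_isOccOf hR hoo' hne true,
    hr.exists_mem_class_isOccOf hR hoo' hne false⟩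

/-- Proposition 3: every equivalence class of an MIR with at least
two elements contains a positive occurrence and a negative occurrence. -/
theorem MIR_class_contains_both_polarities (K : Occ.PB)
    (R : Occ.Occurrence → ℕ) (hR : Occ.IsCRenaming K R)
    (r : Occ.Rel) (hr : Occ.IsMIR K R r)
    (o : Occ.Occurrence) (ho : Occ.IsOcc K o)
    (htwo : ∃ o', (o, o') ∈ r ∧ o' ≠ o) :
    (∃ op, (o, op) ∈ r ∧ Occ.IsPosOcc K op) ∧
      (∃ og, (o, og) ∈ r ∧ Occ.IsNegOcc K og) :=
  MIR_class_contains_both_polarities_general K R hR r hr o htwo
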